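/- Let Σ be a counting signature with exactly m counting predicates, let 𝔄 be a chromatic, Y-branching structure interpreting Σ, let π be a 1-type over Σ, and let B ⊆ A be a π-patch. If 𝔄 is (mY+1)²-differentiated, then there exists a structure 𝔄' that is a ({π},B)-approximation to 𝔄 in which all elements of B have the same {π}-profile. -/

import Mathlib

/-- A counting signature: finite sets of unary and binary predicate symbols,
with a distinguished finite set of binary predicates (the counting predicates). -/
structure CSig where
  U : Type
  B : Type
  [instU : Fintype U]
  [instDU : DecidableEq U]
  [instB : Fintype B]
  [instDB : DecidableEq B]
  counting : Finset B

attribute [instance] CSig.instU CSig.instDU CSig.instB CSig.instDB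

/-- A structure interpreting a counting signature over domain `A`. -/
structure Struc (σ : CSig) (A : Type) where
  unary : σ.U → A → Bool
  binary : σ.B → A → A → Bool

/-- A 1-type over `σ`: a truth assignment to all literals in the single variable x. -/
structure OneType (σ : CSig) where
  u : σ.U → Bool
  d : σ.B → Bool
deriving DecidableEq, Fintype

/-- A 2-type over `σ`: a truth assignment to all equality-free literals in x, y. -/
structure TwoType (σ : CSig) where
  ux : σ.U → Bool
  uy : σ.U → Bool
  dx : σ.B → Bool
  dy : σ.B → Bool
  rxy : σ.B → Bool
  ryx : σ.B → Bool
deriving DecidableEq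

variable {σ : CSig} {A : Type}

/-- Explicit equivalence of `TwoType σ` with a product, giving finiteness. -/
def TwoType.equivProd (σ : CSig) :
    TwoType σ ≃ ((σ.U → Bool) × (σ.U → Bool) × (σ.B → Bool) × (σ.B → Bool) ×
      (σ.B → Bool) × (σ.B → Bool)) where
  toFun τ := ⟨τ.ux, τ.uy, τ.dx, τ.dy, τ.rxy, τ.ryx⟩
  invFun p := ⟨p.1, p.2.1, p.2.2.1, p.2.2.2.1, p.2.2.2.2.1, p.2.2.2.2.2⟩
  left_inv τ := rfl
  right_inv p := rfl

instance : Fintype (TwoType σ) := Fintype.ofEquiv _ (TwoType.equivProd σ).symm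

/-- The result of transposing x and y in a 2-type. -/
def TwoType.inv (τ : TwoType σ) : TwoType σ := ⟨τ.uy, τ.ux, τ.dy, τ.dx, τ.ryx, τ.rxy⟩

/-- The 1-type (of x) included in a 2-type. -/
def TwoType.tp1 (τ : TwoType σ) : OneType σ := ⟨τ.ux, τ.dx⟩

/-- tp₂(τ) = tp₁(τ⁻¹). -/
def TwoType.tp2 (τ : TwoType σ) : OneType σ := ⟨τ.uy, τ.dy⟩

/-- The 1-type of an element. -/
def Struc.tp1 (S : Struc σ A) (a : A) : OneType σ :=
  ⟨fun p => S.unary p a, fun f => S.binary f a a⟩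

/-- The 2-type of a pair of (distinct) elements. -/
def Struc.tp2 (S : Struc σ A) (a b : A) : TwoType σ :=
  ⟨fun p => S.unary p a, fun p => S.unary p b,
   fun f => S.binary f a a, fun f => S.binary f b b,
   fun f => S.binary f a b, fun f => S.binary f b a⟩

/-- A 2-type is a message-type if it contains f(x,y) for some counting predicate f. -/
def IsMessage (σ : CSig) (τ : TwoType σ) : Prop := ∃ f ∈ σ.counting, τ.rxy f = true

instance : DecidablePred (IsMessage σ) := fun τ => by unfold IsMessage; infer_instance

/-- A message-type whose inverse is also a message-type. -/
def IsInvertible (σ : CSig) (τ : TwoType σ) : Prop := IsMessage σ τ ∧ IsMessage σ τ.inv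

instance : DecidablePred (IsInvertible σ) := fun τ => by unfold IsInvertible; infer_instance

/-- A 2-type is silent if neither it nor its inverse is a message-type. -/
def IsSilent (σ : CSig) (τ : TwoType σ) : Prop := ¬ IsMessage σ τ ∧ ¬ IsMessage σ τ.inv

/-- The (sub)type of message-types over σ. -/
def MsgType (σ : CSig) := {τ : TwoType σ // IsMessage σ τ}

instance : Fintype (MsgType σ) := Subtype.fintype _
instance : DecidableEq (MsgType σ) := fun a b => by
  exact (inferInstance : DecidableEq {τ : TwoType σ // IsMessage σ τ}) a b

/-- Y-branching: every element sends at most Y messages along each counting predicate. -/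
def Struc.Branching (S : Struc σ A) (Y : ℕ) : Prop :=
  ∀ a : A, ∀ f ∈ σ.counting, {b : A | b ≠ a ∧ S.binary f a b = true}.encard ≤ (Y : ℕ∞)

def Struc.FinitelyBranching (S : Struc σ A) : Prop := ∃ Y : ℕ, S.Branching Y

/-- Chromatic: distinct elements connected by a chain of 1 or 2 invertible
message-types have distinct 1-types. -/
def Struc.Chromatic (S : Struc σ A) : Prop :=
  (∀ a a' : A, a ≠ a' → IsInvertible σ (S.tp2 a a') → S.tp1 a ≠ S.tp1 a') ∧
  (∀ a a' a'' : A, a ≠ a' → a' ≠ a'' → a ≠ a'' →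
     IsInvertible σ (S.tp2 a a') → IsInvertible σ (S.tp2 a' a'') → S.tp1 a ≠ S.tp1 a'')

/-- Z-differentiated: each 1-type is realized either at most once or more than Z times. -/
def Struc.Differentiated (S : Struc σ A) (Z : ℕ) : Prop :=
  ∀ π : OneType σ, {a : A | S.tp1 a = π}.encard ≤ 1 ∨ (Z : ℕ∞) < {a : A | S.tp1 a = π}.encard

/-- π and π' form a noisy pair: no silent 2-type connects an element of 1-type π
to an element of 1-type π'. -/
def NoisyPair (S : Struc σ A) (π π' : OneType σ) : Prop :=
  ¬ ∃ a a' : A, a ≠ a' ∧ S.tp1 a = π ∧ S.tp1 a' = π' ∧ IsSilent σ (S.tp2 a a')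

/-- The Π-profile of a: for each message-type μ, the number of elements b with 1-type
in Π such that tp[a,b] = μ. -/
noncomputable def Struc.pr (S : Struc σ A) (P : Set (OneType σ)) (a : A) : MsgType σ → ℕ∞ :=
  fun μ => {b : A | b ≠ a ∧ S.tp1 b ∈ P ∧ S.tp2 a b = μ.1}.encard

/-- The Π-count of a: for each counting predicate f, the number of elements b ≠ a with
1-type in Π such that f[a,b] holds. -/
noncomputable def Struc.ct (S : Struc σ A) (P : Set (OneType σ)) (a : A) :
    {f : σ.B // f ∈ σ.counting} → ℕ∞ :=
  fun f => {b : A | b ≠ a ∧ S.tp1 b ∈ P ∧ S.binary f.1 a b = true}.encard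

/-- A Π-group: all elements share the same 1-type and the same Π-count. -/
def PiGroup (S : Struc σ A) (P : Set (OneType σ)) (B : Set A) : Prop :=
  ∀ a ∈ B, ∀ b ∈ B, S.tp1 a = S.tp1 b ∧ S.ct P a = S.ct P b

/-- A π-patch: a {π}-group all of whose elements have {π}-profiles agreeing on the
invertible message-types (the first M* coordinates). -/
def PiPatch (S : Struc σ A) (π : OneType σ) (B : Set A) : Prop :=
  PiGroup S {π} B ∧
  ∀ a ∈ B, ∀ b ∈ B, ∀ μ : MsgType σ, IsInvertible σ μ.1 → S.pr {π} a μ = S.pr {π} b μ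

/-- τ is realized in S. -/
def Realizes2 (S : Struc σ A) (τ : TwoType σ) : Prop := ∃ a b : A, a ≠ b ∧ S.tp2 a b = τ

/-- (Π,B)-approximation. -/
def PiBApprox (S S' : Struc σ A) (P : Set (OneType σ)) (B : Set A) : Prop :=
  S'.Chromatic ∧
  (∀ τ : TwoType σ, Realizes2 S' τ → Realizes2 S τ) ∧
  ∀ a : A,
    S'.tp1 a = S.tp1 a ∧
    S'.pr Pᶜ a = S.pr Pᶜ a ∧
    (a ∉ B → S'.pr Set.univ a = S.pr Set.univ a) ∧
    (a ∈ B → S'.ct P a = S.ct P a)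
/-- A star-type: a 1-type together with a vector of multiplicities indexed by the
message-types. -/
structure StarType (σ : CSig) where
  tp : OneType σ
  v : MsgType σ → ℕ
deriving DecidableEq

/-- The defining condition on star-types: v(μ) > 0 implies tp₁(μ) = π. -/
def StarType.IsValid (s : StarType σ) : Prop :=
  ∀ μ : MsgType σ, 0 < s.v μ → μ.1.tp1 = s.tp

/-- The star-type of an element: its 1-type together with its profile. -/
noncomputable def StarOf (S : Struc σ A) (a : A) : StarType σ where
  tp := S.tp1 a
  v := fun μ => ({b : A | b ≠ a ∧ S.tp2 a b = μ.1}.encard).toNat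

/-- X-sparse: at most X distinct star-types are realized. -/
noncomputable def Struc.Sparse (S : Struc σ A) (X : ℕ) : Prop :=
  {st : StarType σ | ∃ a : A, StarOf S a = st}.encard ≤ (X : ℕ∞)

/-- A chromatic star-type: for every 1-type π', the multiplicities of invertible
message-types μ with tp₂(μ) = π' sum to at most 1, and to 0 when π' = tp. -/
def StarType.Chromatic (s : StarType σ) : Prop :=
  ∀ π' : OneType σ,
    (∑ μ ∈ Finset.univ.filter (fun μ : MsgType σ => IsInvertible σ μ.1 ∧ μ.1.tp2 = π'),
        s.v μ) ≤ 1 ∧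
    (π' = s.tp →
      (∑ μ ∈ Finset.univ.filter (fun μ : MsgType σ => IsInvertible σ μ.1 ∧ μ.1.tp2 = π'),
        s.v μ) = 0)

/-- A frame over σ: a finite set of (pairwise distinct) star-types, a set I of
unordered pairs of 1-types, and a choice θ of a silent 2-type for each pair in I. -/
structure Frame (σ : CSig) where
  stars : Finset (StarType σ)
  valid : ∀ s ∈ stars, s.IsValid
  I : Set (Sym2 (OneType σ))
  θ : Sym2 (OneType σ) → TwoType σ
  hθ : ∀ p ∈ I, IsSilent σ (θ p) ∧ Sym2.mk (θ p).tp1 (θ p).tp2 = p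

/-- Y-bounded frame: all star-type multiplicities are at most Y. -/
def Frame.Bounded (F : Frame σ) (Y : ℕ) : Prop :=
  ∀ s ∈ F.stars, ∀ μ : MsgType σ, s.v μ ≤ Y

/-- A chromatic frame: all its star-types are chromatic. -/
def Frame.Chromatic (F : Frame σ) : Prop := ∀ s ∈ F.stars, s.Chromatic

/-- F describes S: the stars of F are exactly the realized star-types; I consists of the
non-noisy pairs of 1-types; and each θ-value is realized. -/
def Describes (F : Frame σ) (S : Struc σ A) : Prop :=
  (∀ st : StarType σ, st ∈ F.stars ↔ ∃ a : A, StarOf S a = st) ∧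
  (∀ π π' : OneType σ, Sym2.mk π π' ∈ F.I ↔ ¬ NoisyPair S π π') ∧
  (∀ p ∈ F.I, ∃ a b : A, a ≠ b ∧ S.tp2 a b = F.θ p)

/-- The number M* of invertible message-types over σ. -/
def MstarCard (σ : CSig) : ℕ :=
  (Finset.univ.filter (fun μ : MsgType σ => IsInvertible σ μ.1)).card

/-- p_{ik} = 1: the star-type sends no message to any element of 1-type π. -/
def PZero (s : StarType σ) (π : OneType σ) : Prop :=
  ∀ μ : MsgType σ, μ.1.tp2 = π → s.v μ = 0

instance (s : StarType σ) (π : OneType σ) : Decidable (PZero s π) := by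
  unfold PZero; infer_instance

/-- r_{ik}: total multiplicity of non-invertible message-types with tp₂ = π. -/
def RCoeff (s : StarType σ) (π : OneType σ) : ℕ :=
  ∑ μ ∈ Finset.univ.filter (fun μ : MsgType σ => ¬ IsInvertible σ μ.1 ∧ μ.1.tp2 = π), s.v μ

/-- s_{ik}: total multiplicity of message-types with tp₂ = π. -/
def SCoeff (s : StarType σ) (π : OneType σ) : ℕ :=
  ∑ μ ∈ Finset.univ.filter (fun μ : MsgType σ => μ.1.tp2 = π), s.v μ

/-- u_i = Σ_k o_{ik} w_k. -/
def Frame.uVal (F : Frame σ) (w : StarType σ → ℕ) (π : OneType σ) : ℕ :=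
  ∑ s ∈ F.stars.filter (fun s => s.tp = π), w s

/-- v_j = Σ_k q_{jk} w_k. -/
def Frame.vVal (F : Frame σ) (w : StarType σ → ℕ) (μ : MsgType σ) : ℕ :=
  ∑ s ∈ F.stars, s.v μ * w s

/-- x_{ii'} = Σ_k o_{ik} p_{i'k} w_k. -/
def Frame.xVal (F : Frame σ) (w : StarType σ → ℕ) (π π' : OneType σ) : ℕ :=
  ∑ s ∈ F.stars.filter (fun s => s.tp = π ∧ PZero s π'), w s

/-- w is a Z-solution of F (conditions C1–C6, over positive integers). -/
def IsZSolution (F : Frame σ) (Z : ℕ) (w : StarType σ → ℕ) : Prop :=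
  (∀ s ∈ F.stars, 0 < w s) ∧
  (∀ μ μ' : MsgType σ, IsInvertible σ μ.1 → μ'.1 = μ.1.inv → F.vVal w μ = F.vVal w μ') ∧
  (∀ π : OneType σ, ∀ s ∈ F.stars, SCoeff s π ≤ F.uVal w π) ∧
  (∀ π : OneType σ, F.uVal w π ≤ 1 ∨ Z < F.uVal w π) ∧
  (∀ π π' : OneType σ, ∀ s ∈ F.stars, s.tp = π →
     (1 < F.uVal w π ∨ RCoeff s π' ≤ F.xVal w π' π)) ∧
  (∀ π π' : OneType σ, Sym2.mk π π' ∉ F.I → F.uVal w π ≤ 1 ∨ F.uVal w π' ≤ 1) ∧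
  (∀ π π' : OneType σ, ∀ s ∈ F.stars, Sym2.mk π π' ∉ F.I → s.tp = π →
     (1 < F.uVal w π ∨ F.xVal w π' π ≤ RCoeff s π'))

/-- u_i over ℕ* = ℕ ∪ {ℵ₀}. -/
def Frame.uValE (F : Frame σ) (w : StarType σ → ℕ∞) (π : OneType σ) : ℕ∞ :=
  ∑ s ∈ F.stars.filter (fun s => s.tp = π), w s

/-- v_j over ℕ*. -/
def Frame.vValE (F : Frame σ) (w : StarType σ → ℕ∞) (μ : MsgType σ) : ℕ∞ :=
  ∑ s ∈ F.stars, (s.v μ : ℕ∞) * w s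

/-- x_{ii'} over ℕ*. -/
def Frame.xValE (F : Frame σ) (w : StarType σ → ℕ∞) (π π' : OneType σ) : ℕ∞ :=
  ∑ s ∈ F.stars.filter (fun s => s.tp = π ∧ PZero s π'), w s

/-- w is an extended Z-solution of F: a Z-solution over ℕ* = ℕ ∪ {ℵ₀}
(with nonzero components). -/
def IsExtZSolution (F : Frame σ) (Z : ℕ) (w : StarType σ → ℕ∞) : Prop :=
  (∀ s ∈ F.stars, w s ≠ 0) ∧
  (∀ μ μ' : MsgType σ, IsInvertible σ μ.1 → μ'.1 = μ.1.inv → F.vValE w μ = F.vValE w μ') ∧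
  (∀ π : OneType σ, ∀ s ∈ F.stars, (SCoeff s π : ℕ∞) ≤ F.uValE w π) ∧
  (∀ π : OneType σ, F.uValE w π ≤ 1 ∨ (Z : ℕ∞) < F.uValE w π) ∧
  (∀ π π' : OneType σ, ∀ s ∈ F.stars, s.tp = π →
     (1 < F.uValE w π ∨ (RCoeff s π' : ℕ∞) ≤ F.xValE w π' π)) ∧
  (∀ π π' : OneType σ, Sym2.mk π π' ∉ F.I → F.uValE w π ≤ 1 ∨ F.uValE w π' ≤ 1) ∧
  (∀ π π' : OneType σ, ∀ s ∈ F.stars, Sym2.mk π π' ∉ F.I → s.tp = π →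
     (1 < F.uValE w π ∨ F.xValE w π' π ≤ (RCoeff s π' : ℕ∞)))

/-- The data of a normal-form sentence φ*: a quantifier-free equality-free α(x)
(given semantically by the set of 1-types entailing it), a quantifier-free
equality-free β(x,y) (given by the set of 2-types entailing it), and positive
counts C_h for the counting predicates. -/
structure NormalForm (σ : CSig) where
  alpha : OneType σ → Prop
  beta : TwoType σ → Prop
  C : σ.B → ℕ
  hC : ∀ f ∈ σ.counting, 0 < C f

/-- S ⊨ φ*. -/
def SatNF (N : NormalForm σ) (S : Struc σ A) : Prop :=
  (∀ a : A, N.alpha (S.tp1 a)) ∧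
  (∀ a b : A, a ≠ b → N.beta (S.tp2 a b)) ∧
  (∀ f ∈ σ.counting, ∀ a : A,
     {b : A | b ≠ a ∧ S.binary f a b = true}.encard = (N.C f : ℕ∞))

/-- F ⊨ φ*. -/
def FrameSatNF (N : NormalForm σ) (F : Frame σ) : Prop :=
  (∀ s ∈ F.stars, N.alpha s.tp) ∧
  (∀ s ∈ F.stars, ∀ μ : MsgType σ, 0 < s.v μ → N.beta μ.1 ∧ N.beta μ.1.inv) ∧
  (∀ p ∈ F.I, N.beta (F.θ p) ∧ N.beta ((F.θ p).inv)) ∧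
  (∀ s ∈ F.stars, ∀ f ∈ σ.counting,
     (∑ μ ∈ Finset.univ.filter (fun μ : MsgType σ => μ.1.rxy f = true), s.v μ) = N.C f)

/-- The signature obtained from σ by adding k new unary predicates; the counting
predicates are unchanged. -/
def addUnary (σ : CSig) (k : ℕ) : CSig where
  U := σ.U ⊕ Fin k
  B := σ.B
  counting := σ.counting

/-- S' (interpreting σ with k extra unary predicates) is an expansion of S:
it agrees with S on all predicates of σ. -/
def IsExpansion {σ : CSig} {k : ℕ} {A : Type} (S' : Struc (addUnary σ k) A)
    (S : Struc σ A) : Prop :=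
  (∀ (p : σ.U) (a : A), S'.unary (Sum.inl p) a = S.unary p a) ∧
  (∀ (f : σ.B) (a b : A), S'.binary f a b = S.binary f a b)

/-!
Choose `a₀ ∈ B` with as few non-invertible message partners of 1-type π as possible. For
`x ∈ B`, call a π-element `c ≠ x` a slot of `x` when `c` sends no message to `x` and, if
`c ∈ B`, `x` sends a message to `c`. The slots of `x` contain its non-invertible partners, so
there are at least as many as `a₀` has non-invertible partners, and we may embed the latter
into the former. Give every embedded slot the 2-type that `a₀` has with its preimage, and every
other slot a silent 2-type. Invertible 2-types are never touched, which keeps the structure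
chromatic and the invertible part of the profiles; every element of `B` now has the
{π}-profile of `a₀`, and hence also its {π}-count, which the patch already shares.

A silent 2-type is needed only when a slot `c` of some `x ∈ B` stays unused. Either `(x, c)` is
already silent, or `x` sends `c` a non-invertible message; since the patch fixes the number of
such messages along each counting predicate, `a₀` then has a non-invertible partner as well,
whose image is a second π-element besides `c`. So π and the 1-type of `B` are both realised at
least twice, hence more than `(mY+1)²` times, while every element sends at most `mY` messages;
double counting on two sets of size `(mY+1)² + 1` gives a silent pair.
-/

open Finset

theorem TwoType.ext_tp {τ τ' : TwoType σ} (h₁ : τ.tp1 = τ'.tp1) (h₂ : τ.tp2 = τ'.tp2)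
    (hxy : τ.rxy = τ'.rxy) (hyx : τ.ryx = τ'.ryx) : τ = τ' := by
  cases τ; cases τ'
  simp_all [TwoType.tp1, TwoType.tp2]

theorem Finset.exists_ne_not_rel_not_rel {α : Type*} [DecidableEq α] (R : α → α → Prop)
    [DecidableRel R] {U V : Finset α} {K : ℕ} (hU : ∀ u ∈ U, #(V.filter (R u)) ≤ K)
    (hV : ∀ v ∈ V, #(U.filter (R v)) ≤ K) (hcard : #U * (K + 1) + #V * K < #U * #V) :
    ∃ u ∈ U, ∃ v ∈ V, u ≠ v ∧ ¬ R u v ∧ ¬ R v u := by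
  by_contra! h
  have hrow : ∀ u ∈ U, #V ≤ (K + 1) + #(V.filter (fun v => R v u)) := by
    intro u hu
    have hcover : V ⊆ {u} ∪ V.filter (R u) ∪ V.filter (fun v => R v u) := by
      intro v hv
      by_cases huv : u = v
      · simp [huv]
      by_cases hR : R u v
      · simp [hv, hR]
      · simp [hv, h u hu v hv huv hR]
    calc #V ≤ #({u} ∪ V.filter (R u) ∪ V.filter (fun v => R v u)) := card_le_card hcover
      _ ≤ #({u} ∪ V.filter (R u)) + #(V.filter (fun v => R v u)) := card_union_le _ _
      _ ≤ 1 + #(V.filter (R u)) + #(V.filter (fun v => R v u)) := by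
        gcongr; exact (card_union_le _ _).trans (by simp)
      _ ≤ (K + 1) + #(V.filter (fun v => R v u)) := by linarith [hU u hu]
  have hswap : ∑ u ∈ U, #(V.filter (fun v => R v u)) = ∑ v ∈ V, #(U.filter (R v)) :=
    sum_card_bipartiteAbove_eq_sum_card_bipartiteBelow (fun u v => R v u)
  have : #U * #V ≤ #U * (K + 1) + #V * K :=
    calc #U * #V = ∑ _u ∈ U, #V := by simp
      _ ≤ ∑ u ∈ U, ((K + 1) + #(V.filter (fun v => R v u))) := sum_le_sum hrow
      _ = #U * (K + 1) + ∑ v ∈ V, #(U.filter (R v)) := by simp [sum_add_distrib, hswap]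
      _ ≤ #U * (K + 1) + #V * K := by
        gcongr
        simpa using sum_le_card_nsmul V _ K hV
  omega

theorem Set.exists_finset_subset_card_eq {α : Type*} {s : Set α} {n : ℕ}
    (h : (n : ℕ∞) ≤ s.encard) : ∃ t : Finset α, ↑t ⊆ s ∧ #t = n := by
  obtain ⟨t, hts, ht⟩ := Set.exists_subset_encard_eq h
  lift t to Finset α using Set.finite_of_encard_eq_coe ht
  exact ⟨t, hts, by simpa using ht⟩

def MsgType.along (f : σ.B) : Finset (MsgType σ) :=
  univ.filter fun μ => μ.1.rxy f = true

namespace Struc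

section

variable (S : Struc σ A)

theorem tp2_inv (a b : A) : (S.tp2 a b).inv = S.tp2 b a := rfl

theorem ct_eq_sum_pr (P : Set (OneType σ)) (a : A)
    (f : {f : σ.B // f ∈ σ.counting}) :
    S.ct P a f = ∑ μ ∈ MsgType.along f.1, S.pr P a μ := by
  have hunion : {b | b ≠ a ∧ S.tp1 b ∈ P ∧ S.binary f.1 a b = true} =
      ⋃ μ : {μ : MsgType σ // μ.1.rxy f = true},
        {b | b ≠ a ∧ S.tp1 b ∈ P ∧ S.tp2 a b = μ.1.1} := by
    ext b
    rw [Set.mem_iUnion]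
    constructor
    · rintro ⟨hne, hP, hb⟩
      exact ⟨⟨⟨S.tp2 a b, f.1, f.2, hb⟩, hb⟩, hne, hP, rfl⟩
    · rintro ⟨μ, hne, hP, heq⟩
      refine ⟨hne, hP, ?_⟩
      change (S.tp2 a b).rxy f = true
      rw [heq]
      exact μ.2
  have hdisj : Pairwise fun μ ν : {μ : MsgType σ // μ.1.rxy f = true} =>
      Disjoint {b | b ≠ a ∧ S.tp1 b ∈ P ∧ S.tp2 a b = μ.1.1}
        {b | b ≠ a ∧ S.tp1 b ∈ P ∧ S.tp2 a b = ν.1.1} := fun μ ν hμν =>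
    Set.disjoint_left.2 fun _ hμ hν =>
      hμν (Subtype.ext (Subtype.ext (hμ.2.2.symm.trans hν.2.2)))
  rw [Struc.ct, hunion, Set.encard_iUnion_of_finite hdisj, finsum_eq_sum_of_fintype]
  exact (sum_subtype _ (fun μ => by simp [MsgType.along]) (S.pr P a)).symm

variable {S}

theorem Branching.encard_message_le {Y : ℕ} (hbr : S.Branching Y) (a : A) :
    {b | b ≠ a ∧ IsMessage σ (S.tp2 a b)}.encard ≤ σ.counting.card * Y :=
  calc {b | b ≠ a ∧ IsMessage σ (S.tp2 a b)}.encard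
      ≤ (⋃ f ∈ σ.counting, {b | b ≠ a ∧ S.binary f a b = true}).encard := by
        refine Set.encard_mono ?_
        rintro b ⟨hne, f, hf, hb⟩
        exact Set.mem_iUnion₂.2 ⟨f, hf, hne, hb⟩
    _ ≤ ∑ f ∈ σ.counting, {b | b ≠ a ∧ S.binary f a b = true}.encard :=
        set_encard_biUnion_le _ _
    _ ≤ ∑ _f ∈ σ.counting, (Y : ℕ∞) := sum_le_sum fun f hf => hbr a f hf
    _ = σ.counting.card * Y := by simp

theorem Branching.ct_le {Y : ℕ} (hbr : S.Branching Y) (P : Set (OneType σ)) (a : A)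
    (f : {f : σ.B // f ∈ σ.counting}) : S.ct P a f ≤ Y :=
  (Set.encard_mono (b := {b | b ≠ a ∧ S.binary f.1 a b = true})
    fun _ hb => ⟨hb.1, hb.2.2⟩).trans (hbr a f.1 f.2)

theorem Differentiated.lt_encard {Z : ℕ} (hdiff : S.Differentiated Z) {a b : A} (hab : a ≠ b)
    (h : S.tp1 a = S.tp1 b) : (Z : ℕ∞) < {c | S.tp1 c = S.tp1 a}.encard := by
  refine (hdiff _).resolve_left fun hle => ?_
  have htwo : (2 : ℕ∞) ≤ {c | S.tp1 c = S.tp1 a}.encard := by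
    rw [← Set.encard_pair hab]
    exact Set.encard_mono (by rintro c (rfl | rfl) <;> simp [h])
  exact absurd (htwo.trans hle) (by norm_num)

theorem exists_isSilent {Y : ℕ} (hbr : S.Branching Y)
    (hdiff : S.Differentiated ((σ.counting.card * Y + 1) ^ 2))
    {u₁ u₂ v₁ v₂ : A} (hu : u₁ ≠ u₂) (hu' : S.tp1 u₁ = S.tp1 u₂)
    (hv : v₁ ≠ v₂) (hv' : S.tp1 v₁ = S.tp1 v₂) :
    ∃ u v, u ≠ v ∧ S.tp1 u = S.tp1 u₁ ∧ S.tp1 v = S.tp1 v₁ ∧ IsSilent σ (S.tp2 u v) := by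
  classical
  set K := σ.counting.card * Y
  have hbig : ∀ {a b : A}, a ≠ b → S.tp1 a = S.tp1 b →
      (((K + 1) ^ 2 + 1 : ℕ) : ℕ∞) ≤ {c | S.tp1 c = S.tp1 a}.encard := fun hab h => by
    push_cast
    exact Order.add_one_le_of_lt (by exact_mod_cast hdiff.lt_encard hab h)
  obtain ⟨U, hUs, hUc⟩ := Set.exists_finset_subset_card_eq (hbig hu hu')
  obtain ⟨V, hVs, hVc⟩ := Set.exists_finset_subset_card_eq (hbig hv hv')
  let R : A → A → Prop := fun a b => b ≠ a ∧ IsMessage σ (S.tp2 a b)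
  have hdeg : ∀ (a : A) (T : Finset A), #(T.filter (R a)) ≤ K := fun a T => by
    have hsub : (↑(T.filter (R a)) : Set A) ⊆ {b | b ≠ a ∧ IsMessage σ (S.tp2 a b)} :=
      fun b hb => (mem_filter.1 hb).2
    exact_mod_cast (Set.encard_mono hsub).trans (hbr.encard_message_le a)
  obtain ⟨u, hu, v, hv, huv, huv', hvu'⟩ := Finset.exists_ne_not_rel_not_rel R
    (fun u _ => hdeg u V) (fun v _ => hdeg v U) (by rw [hUc, hVc]; nlinarith)
  exact ⟨u, v, huv, hUs hu, hVs hv, fun h => huv' ⟨huv.symm, h⟩, fun h => hvu' ⟨huv, h⟩⟩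

end

open Classical in
noncomputable def reassign (S : Struc σ A) (R : A → A → Prop) (new : A → A → TwoType σ) :
    Struc σ A where
  unary := S.unary
  binary f x y :=
    if R x y then (new x y).rxy f else if R y x then (new y x).ryx f else S.binary f x y

structure IsReassignment (S : Struc σ A) (R : A → A → Prop) (new : A → A → TwoType σ) :
    Prop where
  asymm : ∀ ⦃x y⦄, R x y → ¬ R y x
  tp1_new : ∀ ⦃x y⦄, R x y → (new x y).tp1 = S.tp1 x
  tp2_new : ∀ ⦃x y⦄, R x y → (new x y).tp2 = S.tp1 y

namespace IsReassignment

variable {S : Struc σ A} {R : A → A → Prop} {new : A → A → TwoType σ}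

theorem tp1_reassign (h : S.IsReassignment R new) (x : A) :
    (S.reassign R new).tp1 x = S.tp1 x := by
  have hxx : ¬ R x x := fun hx => h.asymm hx hx
  simp [Struc.tp1, reassign, hxx]

theorem tp2_reassign_of_rel (h : S.IsReassignment R new) {x y : A} (hxy : R x y) :
    (S.reassign R new).tp2 x y = new x y :=
  TwoType.ext_tp ((h.tp1_reassign x).trans (h.tp1_new hxy).symm)
    ((h.tp1_reassign y).trans (h.tp2_new hxy).symm)
    (funext fun f => by simp [Struc.tp2, reassign, hxy])
    (funext fun f => by simp [Struc.tp2, reassign, hxy, h.asymm hxy])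

open Classical in
theorem tp2_reassign (h : S.IsReassignment R new) (x y : A) :
    (S.reassign R new).tp2 x y =
      if R x y then new x y else if R y x then (new y x).inv else S.tp2 x y := by
  split_ifs with hxy hyx
  · exact h.tp2_reassign_of_rel hxy
  · rw [← tp2_inv, h.tp2_reassign_of_rel hyx]
  · exact TwoType.ext_tp (h.tp1_reassign x) (h.tp1_reassign y)
      (funext fun f => by simp [Struc.tp2, reassign, hxy, hyx])
      (funext fun f => by simp [Struc.tp2, reassign, hxy, hyx])

end IsReassignment

section Slots

variable (S : Struc σ A) (π : OneType σ) (B : Set A)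

def nonInvPartners (a : A) : Set A :=
  {c | c ≠ a ∧ S.tp1 c = π ∧ IsMessage σ (S.tp2 a c) ∧ ¬ IsInvertible σ (S.tp2 a c)}

/-- The π-elements whose 2-type with `a` may be rewritten. The condition for `c ∈ B`
makes sure that no pair is a slot of both of its ends. -/
def slots (a : A) : Set A :=
  {c | c ≠ a ∧ S.tp1 c = π ∧ ¬ IsMessage σ (S.tp2 c a) ∧
    (c ∈ B → IsMessage σ (S.tp2 a c))}

variable {S π B}

theorem nonInvPartners_subset_slots (a : A) : S.nonInvPartners π a ⊆ S.slots π B a :=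
  fun _ ⟨hne, hπ, hmsg, hinv⟩ => ⟨hne, hπ, fun h => hinv ⟨hmsg, h⟩, fun _ => hmsg⟩

theorem not_isInvertible_of_mem_slots {a c : A} (hc : c ∈ S.slots π B a) :
    ¬ IsInvertible σ (S.tp2 a c) :=
  fun h => hc.2.2.1 h.2

theorem Branching.finite_nonInvPartners {Y : ℕ} (hbr : S.Branching Y) (a : A) :
    (S.nonInvPartners π a).Finite :=
  Set.finite_of_encard_le_coe <|
    (Set.encard_mono (b := {c | c ≠ a ∧ IsMessage σ (S.tp2 a c)})
      fun _ hc => ⟨hc.1, hc.2.2.1⟩).trans (hbr.encard_message_le a)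

end Slots

end Struc

open Struc

structure PatchUnifier (S : Struc σ A) (π : OneType σ) (B : Set A) where
  base : A
  base_mem : base ∈ B
  embed : A → A → A
  mapsTo_embed : ∀ x ∈ B, Set.MapsTo (embed x) (S.nonInvPartners π base) (S.slots π B x)
  injOn_embed : ∀ x ∈ B, Set.InjOn (embed x) (S.nonInvPartners π base)
  filler : TwoType σ
  filler_spec : ∀ x ∈ B, ∀ c ∈ S.slots π B x, c ∉ embed x '' S.nonInvPartners π base →
    ∃ u v, u ≠ v ∧ S.tp1 u = S.tp1 base ∧ S.tp1 v = π ∧ S.tp2 u v = filler ∧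
      IsSilent σ filler

namespace PatchUnifier

variable {S : Struc σ A} {π : OneType σ} {B : Set A} (D : PatchUnifier S π B)

open Classical in
noncomputable def newType (x c : A) : TwoType σ :=
  if h : c ∈ D.embed x '' S.nonInvPartners π D.base then
    S.tp2 D.base ((Set.mem_image _ _ _).1 h).choose
  else D.filler

noncomputable def struc : Struc σ A :=
  S.reassign (fun x c => x ∈ B ∧ c ∈ S.slots π B x) D.newType

theorem newType_spec (hB : PiPatch S π B) {x c : A} (hx : x ∈ B) (hc : c ∈ S.slots π B x) :
    ∃ u v, u ≠ v ∧ S.tp1 u = S.tp1 x ∧ S.tp1 v = S.tp1 c ∧ S.tp2 u v = D.newType x c ∧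
      ¬ IsMessage σ (S.tp2 v u) := by
  have hbase := (hB.1 D.base D.base_mem x hx).1
  unfold newType
  split_ifs with h
  · obtain ⟨⟨hne, hπ, hmsg, hinv⟩, -⟩ := ((Set.mem_image _ _ _).1 h).choose_spec
    exact ⟨_, _, hne.symm, hbase, hπ.trans hc.2.1.symm, rfl, fun h' => hinv ⟨hmsg, h'⟩⟩
  · obtain ⟨u, v, huv, hu, hv, hfill, hsil⟩ := D.filler_spec x hx c hc h
    rw [← hfill] at hsil
    exact ⟨u, v, huv, hu.trans hbase, hv.trans hc.2.1.symm, hfill, hsil.2⟩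

theorem isReassignment (hB : PiPatch S π B) :
    S.IsReassignment (fun x c => x ∈ B ∧ c ∈ S.slots π B x) D.newType where
  asymm _ _ hxc hcx := hcx.2.2.2.1 (hxc.2.2.2.2 hcx.1)
  tp1_new _ _ h := by
    obtain ⟨u, v, -, hu, -, huv, -⟩ := D.newType_spec hB h.1 h.2
    rw [← huv]; exact hu
  tp2_new _ _ h := by
    obtain ⟨u, v, -, -, hv, huv, -⟩ := D.newType_spec hB h.1 h.2
    rw [← huv]; exact hv

theorem not_isMessage_newType_inv (hB : PiPatch S π B) {x c : A} (hx : x ∈ B)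
    (hc : c ∈ S.slots π B x) : ¬ IsMessage σ (D.newType x c).inv := by
  obtain ⟨u, v, -, -, -, huv, hvu⟩ := D.newType_spec hB hx hc
  rwa [← huv]

theorem setOf_newType_eq {x : A} (hx : x ∈ B) {μ : TwoType σ} (hμ : IsMessage σ μ) :
    {c | c ∈ S.slots π B x ∧ D.newType x c = μ} =
      D.embed x '' {d | d ∈ S.nonInvPartners π D.base ∧ S.tp2 D.base d = μ} := by
  ext c
  constructor
  · rintro ⟨hc, hμc⟩
    unfold newType at hμc
    split_ifs at hμc with h
    · obtain ⟨hd, hdc⟩ := ((Set.mem_image _ _ _).1 h).choose_spec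
      exact ⟨_, ⟨hd, hμc⟩, hdc⟩
    · obtain ⟨-, -, -, -, -, -, hsil⟩ := D.filler_spec x hx c hc h
      exact absurd (hμc ▸ hμ) hsil.1
  · rintro ⟨d, ⟨hd, hμd⟩, rfl⟩
    have hmem : D.embed x d ∈ D.embed x '' S.nonInvPartners π D.base :=
      Set.mem_image_of_mem _ hd
    refine ⟨D.mapsTo_embed x hx hd, ?_⟩
    obtain ⟨hd', hdd'⟩ := ((Set.mem_image _ _ _).1 hmem).choose_spec
    rw [newType, dif_pos hmem, D.injOn_embed x hx hd' hd hdd']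
    exact hμd

theorem tp1_struc (hB : PiPatch S π B) (x : A) : D.struc.tp1 x = S.tp1 x :=
  (D.isReassignment hB).tp1_reassign x

theorem tp2_struc_of_mem_slots (hB : PiPatch S π B) {x c : A} (hx : x ∈ B)
    (hc : c ∈ S.slots π B x) : D.struc.tp2 x c = D.newType x c :=
  (D.isReassignment hB).tp2_reassign_of_rel ⟨hx, hc⟩

theorem tp2_struc_eq_iff (hB : PiPatch S π B) {x c : A} {μ : TwoType σ} (hμ : IsMessage σ μ)
    (h : ¬ (x ∈ B ∧ c ∈ S.slots π B x) ∨ IsInvertible σ μ) :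
    D.struc.tp2 x c = μ ↔ S.tp2 x c = μ := by
  rw [struc, (D.isReassignment hB).tp2_reassign]
  split_ifs with hxc hcx
  · have hμ' : IsInvertible σ μ := h.resolve_left (not_not.2 hxc)
    exact iff_of_false (fun he => D.not_isMessage_newType_inv hB hxc.1 hxc.2 (he ▸ hμ'.2))
      (fun he => not_isInvertible_of_mem_slots hxc.2 (he ▸ hμ'))
  · exact iff_of_false (fun he => D.not_isMessage_newType_inv hB hcx.1 hcx.2 (by rwa [he]))
      (fun he => hcx.2.2.2.1 (by rw [he]; exact hμ))
  · rfl

theorem tp2_struc_of_isInvertible (hB : PiPatch S π B) {x y : A}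
    (h : IsInvertible σ (D.struc.tp2 x y)) : D.struc.tp2 x y = S.tp2 x y :=
  ((D.tp2_struc_eq_iff hB h.1 (Or.inr h)).1 rfl).symm

theorem realizes2_struc (hB : PiPatch S π B) {τ : TwoType σ} (h : Realizes2 D.struc τ) :
    Realizes2 S τ := by
  obtain ⟨x, y, hxy, rfl⟩ := h
  rw [struc, (D.isReassignment hB).tp2_reassign]
  split_ifs with hxy' hyx'
  · obtain ⟨u, v, huv, -, -, he, -⟩ := D.newType_spec hB hxy'.1 hxy'.2
    exact ⟨u, v, huv, he⟩
  · obtain ⟨u, v, huv, -, -, he, -⟩ := D.newType_spec hB hyx'.1 hyx'.2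
    exact ⟨v, u, huv.symm, by rw [← he]; rfl⟩
  · exact ⟨x, y, hxy, rfl⟩

theorem chromatic_struc (hB : PiPatch S π B) (hchr : S.Chromatic) : D.struc.Chromatic := by
  refine ⟨fun a a' hne hinv => ?_, fun a a' a'' h₁ h₂ h₃ hinv hinv' => ?_⟩
  · rw [D.tp1_struc hB, D.tp1_struc hB]
    rw [D.tp2_struc_of_isInvertible hB hinv] at hinv
    exact hchr.1 a a' hne hinv
  · rw [D.tp1_struc hB, D.tp1_struc hB]
    rw [D.tp2_struc_of_isInvertible hB hinv] at hinv
    rw [D.tp2_struc_of_isInvertible hB hinv'] at hinv'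
    exact hchr.2 a a' a'' h₁ h₂ h₃ hinv hinv'

theorem pr_struc_eq (hB : PiPatch S π B) {P : Set (OneType σ)} {x : A} {μ : MsgType σ}
    (h : ∀ c, S.tp1 c ∈ P → ¬ (x ∈ B ∧ c ∈ S.slots π B x) ∨ IsInvertible σ μ.1) :
    D.struc.pr P x μ = S.pr P x μ := by
  refine congrArg Set.encard (Set.ext fun c => ?_)
  simp only [D.tp1_struc hB]
  exact and_congr_right fun _ => and_congr_right fun hc => D.tp2_struc_eq_iff hB μ.2 (h c hc)

theorem pr_struc_of_mem (hB : PiPatch S π B) {x : A} (hx : x ∈ B) :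
    D.struc.pr {π} x = S.pr {π} D.base := by
  funext μ
  by_cases hμ : IsInvertible σ μ.1
  · rw [D.pr_struc_eq hB fun _ _ => Or.inr hμ]
    exact hB.2 x hx D.base D.base_mem μ hμ
  have hslots :
      {c | c ≠ x ∧ D.struc.tp1 c ∈ ({π} : Set (OneType σ)) ∧ D.struc.tp2 x c = μ.1} =
        {c | c ∈ S.slots π B x ∧ D.newType x c = μ.1} := by
    ext c
    simp only [Set.mem_ofPred_eq, Set.mem_singleton_iff, D.tp1_struc hB]
    by_cases hc : c ∈ S.slots π B x
    · rw [D.tp2_struc_of_mem_slots hB hx hc]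
      exact ⟨fun h => ⟨hc, h.2.2⟩, fun h => ⟨hc.1, hc.2.1, h.2⟩⟩
    · rw [D.tp2_struc_eq_iff hB μ.2 (Or.inl fun h => hc h.2)]
      exact iff_of_false (fun ⟨hne, hπ, he⟩ => hc (nonInvPartners_subset_slots x
        ⟨hne, hπ, he ▸ μ.2, he ▸ hμ⟩)) (fun h => hc h.1)
  have hbase : {d | d ∈ S.nonInvPartners π D.base ∧ S.tp2 D.base d = μ.1} =
      {d | d ≠ D.base ∧ S.tp1 d ∈ ({π} : Set (OneType σ)) ∧ S.tp2 D.base d = μ.1} := by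
    ext d
    exact ⟨fun ⟨⟨hne, hπ, _, _⟩, he⟩ => ⟨hne, hπ, he⟩,
      fun ⟨hne, hπ, he⟩ => ⟨⟨hne, hπ, he ▸ μ.2, he ▸ hμ⟩, he⟩⟩
  calc D.struc.pr {π} x μ = {c | c ∈ S.slots π B x ∧ D.newType x c = μ.1}.encard :=
        congrArg Set.encard hslots
    _ = {d | d ∈ S.nonInvPartners π D.base ∧ S.tp2 D.base d = μ.1}.encard := by
        rw [D.setOf_newType_eq hx μ.2]
        exact ((D.injOn_embed x hx).mono fun _ hd => hd.1).encard_image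
    _ = S.pr {π} D.base μ := congrArg Set.encard hbase

theorem ct_struc_of_mem (hB : PiPatch S π B) {x : A} (hx : x ∈ B) :
    D.struc.ct {π} x = S.ct {π} x := by
  funext f
  rw [ct_eq_sum_pr, D.pr_struc_of_mem hB hx, ← ct_eq_sum_pr]
  exact congrFun (hB.1 D.base D.base_mem x hx).2 f

theorem piBApprox_struc (hB : PiPatch S π B) (hchr : S.Chromatic) :
    PiBApprox S D.struc {π} B := by
  refine ⟨D.chromatic_struc hB hchr, fun _ => D.realizes2_struc hB, fun x =>
    ⟨D.tp1_struc hB x, funext fun μ => ?_, fun hx => funext fun μ => ?_,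
      fun hx => D.ct_struc_of_mem hB hx⟩⟩
  · exact D.pr_struc_eq hB fun c hc => Or.inl fun h => hc h.2.2.1
  · exact D.pr_struc_eq hB fun c _ => Or.inl fun h => hx h.1

end PatchUnifier

namespace PiPatch

variable {S : Struc σ A} {π : OneType σ} {B : Set A} {Y : ℕ}

theorem sum_pr_nonInvertible_eq (hB : PiPatch S π B) (hbr : S.Branching Y)
    (f : {f : σ.B // f ∈ σ.counting}) {a b : A} (ha : a ∈ B) (hb : b ∈ B) :
    ∑ μ ∈ (MsgType.along f.1).filter (¬ IsInvertible σ ·.1), S.pr {π} a μ =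
      ∑ μ ∈ (MsgType.along f.1).filter (¬ IsInvertible σ ·.1), S.pr {π} b μ := by
  have hsplit : ∀ x, S.ct {π} x f =
      (∑ μ ∈ (MsgType.along f.1).filter (IsInvertible σ ·.1), S.pr {π} x μ) +
        ∑ μ ∈ (MsgType.along f.1).filter (¬ IsInvertible σ ·.1), S.pr {π} x μ := by
    intro x
    rw [S.ct_eq_sum_pr, sum_filter_add_sum_filter_not]
  have hinv : ∑ μ ∈ (MsgType.along f.1).filter (IsInvertible σ ·.1), S.pr {π} a μ =
      ∑ μ ∈ (MsgType.along f.1).filter (IsInvertible σ ·.1), S.pr {π} b μ :=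
    sum_congr rfl fun μ hμ => hB.2 a ha b hb μ (mem_filter.1 hμ).2
  have hfin : ∑ μ ∈ (MsgType.along f.1).filter (IsInvertible σ ·.1), S.pr {π} a μ ≠ ⊤ :=
    ne_top_of_le_ne_top (ENat.natCast_ne_top Y)
      ((hsplit a ▸ le_self_add).trans (hbr.ct_le _ a f))
  have hct := (hsplit a).symm.trans ((congrFun (hB.1 a ha b hb).2 f).trans (hsplit b))
  rw [hinv] at hct
  exact WithTop.add_left_cancel (hinv ▸ hfin) hct

theorem exists_isSilent_of_notMem_image (hB : PiPatch S π B) (hbr : S.Branching Y)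
    (hdiff : S.Differentiated ((σ.counting.card * Y + 1) ^ 2)) (hnt : B.Nontrivial)
    {a₀ x c : A} {e : A → A} (ha₀ : a₀ ∈ B) (hx : x ∈ B)
    (he : Set.MapsTo e (S.nonInvPartners π a₀) (S.slots π B x))
    (hc : c ∈ S.slots π B x) (hce : c ∉ e '' S.nonInvPartners π a₀) :
    ∃ u v, u ≠ v ∧ S.tp1 u = S.tp1 a₀ ∧ S.tp1 v = π ∧ IsSilent σ (S.tp2 u v) := by
  have hx₀ := (hB.1 x hx a₀ ha₀).1
  by_cases hmsg : IsMessage σ (S.tp2 x c)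
  case neg => exact ⟨x, c, hc.1.symm, hx₀, hc.2.1, hmsg, hc.2.2.1⟩
  obtain ⟨f, hf, hfxc⟩ := hmsg
  let μ : MsgType σ := ⟨S.tp2 x c, f, hf, hfxc⟩
  have hpos : S.pr {π} x μ ≠ 0 :=
    Set.encard_ne_zero.2 ⟨c, hc.1, hc.2.1, rfl⟩
  have hsum : ∑ ν ∈ (MsgType.along f).filter (¬ IsInvertible σ ·.1), S.pr {π} a₀ ν ≠ 0 := by
    rw [← hB.sum_pr_nonInvertible_eq hbr ⟨f, hf⟩ hx ha₀]
    have hμ : μ ∈ (MsgType.along f).filter (¬ IsInvertible σ ·.1) :=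
      mem_filter.2 ⟨mem_filter.2 ⟨mem_univ μ, hfxc⟩, not_isInvertible_of_mem_slots hc⟩
    exact (pos_iff_ne_zero.2 hpos |>.trans_le (single_le_sum (fun _ _ => zero_le) hμ)).ne'
  obtain ⟨ν, hν, hν0⟩ := exists_ne_zero_of_sum_ne_zero hsum
  obtain ⟨d, hne, hπ, hdν⟩ := Set.encard_ne_zero.1 hν0
  have hd : d ∈ S.nonInvPartners π a₀ :=
    ⟨hne, hπ, hdν ▸ ν.2, hdν ▸ (mem_filter.1 hν).2⟩
  have hed : e d ≠ c := fun h => hce ⟨d, hd, h⟩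
  obtain ⟨a₁, ha₁, a₂, ha₂, h₁₂⟩ := hnt
  obtain ⟨u, v, huv, hu, hv, hsil⟩ :=
    S.exists_isSilent hbr hdiff h₁₂ (hB.1 a₁ ha₁ a₂ ha₂).1 hed ((he hd).2.1.trans hc.2.1.symm)
  exact ⟨u, v, huv, hu.trans (hB.1 a₁ ha₁ a₀ ha₀).1, hv.trans (he hd).2.1, hsil⟩

theorem nonempty_patchUnifier (hB : PiPatch S π B) (hbr : S.Branching Y)
    (hdiff : S.Differentiated ((σ.counting.card * Y + 1) ^ 2)) (hnt : B.Nontrivial) :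
    Nonempty (PatchUnifier S π B) := by
  obtain ⟨a₁, ha₁⟩ := hnt.nonempty
  have : Nonempty A := ⟨a₁⟩
  let a₀ := Function.argminOn (fun a => (S.nonInvPartners π a).encard) B ⟨a₁, ha₁⟩
  have ha₀ : a₀ ∈ B := Function.argminOn_mem _ _ _
  have hembed : ∀ x, ∃ e : A → A, x ∈ B →
      Set.MapsTo e (S.nonInvPartners π a₀) (S.slots π B x) ∧
        Set.InjOn e (S.nonInvPartners π a₀) := fun x => by
    by_cases hx : x ∈ B
    · have hle : (S.nonInvPartners π a₀).encard ≤ (S.slots π B x).encard :=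
        (Function.argminOn_le (fun a => (S.nonInvPartners π a).encard) B hx).trans
          (Set.encard_mono (nonInvPartners_subset_slots x))
      obtain ⟨e, he, hinj⟩ := (hbr.finite_nonInvPartners a₀).exists_injOn_of_encard_le hle
      exact ⟨e, fun _ => ⟨he, hinj⟩⟩
    · exact ⟨id, fun h => absurd h hx⟩
  choose e he using hembed
  obtain ⟨filler, hfiller⟩ : ∃ τ : TwoType σ, ∀ x ∈ B, ∀ c ∈ S.slots π B x,
      c ∉ e x '' S.nonInvPartners π a₀ →
        ∃ u v, u ≠ v ∧ S.tp1 u = S.tp1 a₀ ∧ S.tp1 v = π ∧ S.tp2 u v = τ ∧ IsSilent σ τ := by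
    by_cases h : ∃ x ∈ B, ∃ c ∈ S.slots π B x, c ∉ e x '' S.nonInvPartners π a₀
    · obtain ⟨x, hx, c, hc, hce⟩ := h
      obtain ⟨u, v, huv, hu, hv, hsil⟩ :=
        hB.exists_isSilent_of_notMem_image hbr hdiff hnt ha₀ hx (he x hx).1 hc hce
      exact ⟨S.tp2 u v, fun _ _ _ _ _ => ⟨u, v, huv, hu, hv, rfl, hsil⟩⟩
    · exact ⟨S.tp2 a₁ a₁, fun x hx c hc hce => absurd ⟨x, hx, c, hc, hce⟩ h⟩
  exact ⟨⟨a₀, ha₀, e, fun x hx => (he x hx).1, fun x hx => (he x hx).2,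
    filler, hfiller⟩⟩

end PiPatch

theorem patch_unification_general (σ : CSig) (m Y : ℕ) (hm : σ.counting.card = m)
    (A : Type) (S : Struc σ A)
    (hchr : S.Chromatic) (hbr : S.Branching Y)
    (π : OneType σ) (B : Set A) (hB : PiPatch S π B)
    (hdiff : S.Differentiated ((m * Y + 1) ^ 2)) :
    ∃ S' : Struc σ A, PiBApprox S S' {π} B ∧
      ∀ a ∈ B, ∀ b ∈ B, S'.pr {π} a = S'.pr {π} b := by
  subst hm
  rcases B.subsingleton_or_nontrivial with hsub | hnt
  · exact ⟨S, ⟨hchr, fun _ h => h, fun _ => ⟨rfl, rfl, fun _ => rfl, fun _ => rfl⟩⟩,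
      fun a ha b hb => by rw [hsub ha hb]⟩
  · obtain ⟨D⟩ := hB.nonempty_patchUnifier hbr hdiff hnt
    exact ⟨D.struc, D.piBApprox_struc hB hchr,
      fun a ha b hb => by rw [D.pr_struc_of_mem hB ha, D.pr_struc_of_mem hB hb]⟩

/-- Lemma 6: in a chromatic, Y-branching, (mY+1)²-differentiated structure, the
{π}-profiles of the elements of any π-patch B can be unified by passing to a
({π},B)-approximation. -/
theorem patch_unification (σ : CSig) (m Y : ℕ) (hm : σ.counting.card = m)
    (A : Type) [Countable A] (S : Struc σ A)
    (hchr : S.Chromatic) (hbr : S.Branching Y)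
    (π : OneType σ) (B : Set A) (hB : PiPatch S π B)
    (hdiff : S.Differentiated ((m * Y + 1) ^ 2)) :
    ∃ S' : Struc σ A, PiBApprox S S' {π} B ∧
      ∀ a ∈ B, ∀ b ∈ B, S'.pr {π} a = S'.pr {π} b :=
  patch_unification_general σ m Y hm A S hchr hbr π B hB hdiff
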